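/- Let J ≥ 1 be an integer, let b be a real number with b ≥ 3^J, let A and m be real numbers with A ≥ 2 and 1 ≤ m ≤ A, and for integers k ≥ 0 and 1 ≤ j ≤ J define N_{j,k} = m · A^{⌈b^{k + (j−1)/J}⌉}, where ⌈·⌉ is the ceiling function and the exponent b^{k+(j−1)/J} is the real power. Then for every integer k ≥ 1 one has N_{J,k}⁴ ≤ N_{1,k+1}²; equivalently, N_{1,k+1}^{−2} ≤ N_{J,k}^{−4}. -/
import Mathlib


/-- Frequency-scale separation: with `N_{j,k} = m·A^{⌈b^{k+(j−1)/J}⌉}` for `J ≥ 1`,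
`b ≥ 3^J`, `A ≥ 2`, `1 ≤ m ≤ A`, one has `N_{J,k}⁴ ≤ N_{1,k+1}²` for all `k ≥ 1`;
equivalently `N_{1,k+1}⁻² ≤ N_{J,k}⁻⁴`. -/
theorem frequency_scale_separation
    (J : ℕ) (hJ : 1 ≤ J) (b A m : ℝ)
    (hb : (3 : ℝ) ^ J ≤ b) (hA : 2 ≤ A) (hm1 : 1 ≤ m) (hmA : m ≤ A)
    (N : ℕ → ℕ → ℝ)
    (hN : ∀ k : ℕ, ∀ j : ℕ, 1 ≤ j → j ≤ J →
      N j k = m * A ^ (⌈b ^ ((k : ℝ) + ((j : ℝ) - 1) / (J : ℝ))⌉ : ℤ)) :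
    ∀ k : ℕ, 1 ≤ k →
      N J k ^ 4 ≤ N 1 (k + 1) ^ 2 ∧ (N 1 (k + 1))⁻¹ ^ 2 ≤ (N J k)⁻¹ ^ 4 := by
  intro k hk
  have hJ0 : (0:ℝ) < (J:ℝ) := by exact_mod_cast hJ
  have hJne : (J:ℝ) ≠ 0 := ne_of_gt hJ0
  have hb3 : (3:ℝ) ≤ b := by
    refine le_trans ?_ hb
    calc (3:ℝ) = 3 ^ 1 := (pow_one 3).symm
    _ ≤ 3 ^ J := pow_le_pow_right₀ (by norm_num) hJ
  have hb1 : (1:ℝ) ≤ b := by linarith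
  have hb0 : (0:ℝ) < b := by linarith
  set e1 : ℝ := (k:ℝ) + ((J:ℝ) - 1) / (J:ℝ) with he1def
  have hk1 : (1:ℝ) ≤ (k:ℝ) := by exact_mod_cast hk
  have he1 : (1:ℝ) ≤ e1 := by
    have : 0 ≤ ((J:ℝ) - 1) / (J:ℝ) := by
      apply div_nonneg _ (le_of_lt hJ0)
      have : (1:ℝ) ≤ (J:ℝ) := by exact_mod_cast hJ
      linarith
    simp only [he1def]; linarith
  set x : ℝ := b ^ e1 with hxdef
  have hx3 : (3:ℝ) ≤ x := by
    refine le_trans hb3 ?_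
    calc b = b ^ (1:ℝ) := (Real.rpow_one b).symm
    _ ≤ b ^ e1 := Real.rpow_le_rpow_of_exponent_le hb1 he1
  have hbinvJ : (3:ℝ) ≤ b ^ ((1:ℝ)/(J:ℝ)) := by
    have h1 : ((3:ℝ) ^ J) ^ ((1:ℝ)/(J:ℝ)) ≤ b ^ ((1:ℝ)/(J:ℝ)) :=
      Real.rpow_le_rpow (by positivity) hb (by positivity)
    have h2 : ((3:ℝ) ^ J) ^ ((1:ℝ)/(J:ℝ)) = 3 := by
      rw [← Real.rpow_natCast 3 J, ← Real.rpow_mul (by norm_num)]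
      rw [mul_one_div, div_self hJne, Real.rpow_one]
    linarith
  have hsplit : ((k:ℝ) + 1) = e1 + (1:ℝ)/(J:ℝ) := by
    simp only [he1def]; field_simp; ring
  have hy : 3 * x ≤ b ^ ((k:ℝ) + 1) := by
    rw [hsplit, Real.rpow_add hb0]
    have hx0 : 0 < x := by linarith
    calc 3 * x ≤ b ^ ((1:ℝ)/(J:ℝ)) * x := by nlinarith
    _ = b ^ e1 * b ^ ((1:ℝ)/(J:ℝ)) := by rw [hxdef]; ring
  set c1 : ℤ := ⌈x⌉ with hc1def
  set c2 : ℤ := ⌈b ^ ((k:ℝ) + 1)⌉ with hc2def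
  have hc : 2 * c1 + 1 ≤ c2 := by
    have h1 : (c1:ℝ) < x + 1 := Int.ceil_lt_add_one x
    have h2 : ((2 * c1 + 1 : ℤ) : ℝ) ≤ b ^ ((k:ℝ) + 1) := by
      push_cast; nlinarith
    rw [hc2def]; exact_mod_cast h2.trans (Int.le_ceil _)
  have eJ : N J k = m * A ^ c1 := by
    rw [hN k J hJ le_rfl]
  have eI : N 1 (k + 1) = m * A ^ c2 := by
    rw [hN (k + 1) 1 le_rfl hJ]
    have h : ((k + 1 : ℕ) : ℝ) + (((1:ℕ):ℝ) - 1) / (J:ℝ) = (k:ℝ) + 1 := by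
      push_cast; ring
    rw [h, ← hc2def]
  have hApos : (0:ℝ) < A := by linarith
  have hAne : A ≠ 0 := ne_of_gt hApos
  have hm0 : (0:ℝ) < m := by linarith
  have hz : A ^ (4 * c1 + 2) ≤ A ^ (2 * c2) :=
    zpow_le_zpow_right₀ (by linarith) (by omega)
  have hmsq : m ^ 2 ≤ A ^ 2 := pow_le_pow_left₀ (by linarith) hmA 2
  have p1 : ((A ^ c1 : ℝ)) ^ (4:ℕ) = A ^ (4 * c1) := by
    rw [← zpow_natCast (A ^ c1) 4, ← zpow_mul]; norm_num [mul_comm]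
  have p2 : ((A ^ c2 : ℝ)) ^ (2:ℕ) = A ^ (2 * c2) := by
    rw [← zpow_natCast (A ^ c2) 2, ← zpow_mul]; norm_num [mul_comm]
  have main : N J k ^ 4 ≤ N 1 (k + 1) ^ 2 := by
    rw [eJ, eI, mul_pow, mul_pow, p1, p2]
    calc m ^ 4 * A ^ (4 * c1) = m ^ 2 * (m ^ 2 * A ^ (4 * c1)) := by ring
    _ ≤ m ^ 2 * (A ^ 2 * A ^ (4 * c1)) := by
        apply mul_le_mul_of_nonneg_left _ (by positivity)
        exact mul_le_mul_of_nonneg_right hmsq (by positivity)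
    _ = m ^ 2 * A ^ (4 * c1 + 2) := by
        rw [← zpow_natCast A 2, ← zpow_add₀ hAne]
        norm_num [add_comm]
    _ ≤ m ^ 2 * A ^ (2 * c2) := mul_le_mul_of_nonneg_left hz (by positivity)
  refine ⟨main, ?_⟩
  have hJpos : 0 < N J k := by rw [eJ]; positivity
  rw [inv_pow, inv_pow]
  exact inv_anti₀ (by positivity) main
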